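/- Let T and S be compact self-adjoint operators on a Hilbert space, and let λ_i(T), λ_i(S) denote their i-th largest positive eigenvalues (counted with multiplicity, via the max-min principle). Then |λ_i(T) − λ_i(S)| ≤ ‖T − S‖ for every i, where ‖·‖ is the operator norm. -/
import Mathlib

open MeasureTheory Set Real RealInnerProductSpace

noncomputable section

/-- The i-th largest positive eigenvalue of an operator on a real Hilbert space,
via the Courant–Fischer max–min principle. -/
def eigOp {H : Type*} [NormedAddCommGroup H] [InnerProductSpace ℝ H]
    (T : H →L[ℝ] H) (i : ℕ) : ℝ :=
  sSup {c | ∃ V : Submodule ℝ H, Module.finrank ℝ V = i ∧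
    c = sInf {r | ∃ x ∈ V, ‖x‖ = 1 ∧ r = ⟪T x, x⟫}}

section aux
variable {H : Type*} [NormedAddCommGroup H] [InnerProductSpace ℝ H]

lemma rayleigh_abs_le (T : H →L[ℝ] H) {x : H} (hx : ‖x‖ = 1) :
    |⟪T x, x⟫| ≤ ‖T‖ := by
  calc |⟪T x, x⟫| ≤ ‖T x‖ * ‖x‖ := abs_real_inner_le_norm _ _
    _ ≤ ‖T‖ * ‖x‖ * ‖x‖ := by
        gcongr
        exact T.le_opNorm x
    _ = ‖T‖ := by rw [hx]; ring

lemma rayleigh_diff (T S : H →L[ℝ] H) {x : H} (hx : ‖x‖ = 1) :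
    ⟪T x, x⟫ ≤ ⟪S x, x⟫ + ‖T - S‖ := by
  have h : ⟪T x, x⟫ - ⟪S x, x⟫ = ⟪(T - S) x, x⟫ := by
    simp [inner_sub_left]
  have h2 := rayleigh_abs_le (T - S) hx
  have := abs_le.mp h2
  linarith [h ▸ this.2]

lemma sInfRay_le (T S : H →L[ℝ] H) (V : Submodule ℝ H) :
    sInf {r | ∃ x ∈ V, ‖x‖ = 1 ∧ r = ⟪T x, x⟫} ≤
      sInf {r | ∃ x ∈ V, ‖x‖ = 1 ∧ r = ⟪S x, x⟫} + ‖T - S‖ := by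
  set RT := {r | ∃ x ∈ V, ‖x‖ = 1 ∧ r = ⟪T x, x⟫} with hRT
  set RS := {r | ∃ x ∈ V, ‖x‖ = 1 ∧ r = ⟪S x, x⟫} with hRS
  by_cases hne : ∃ x ∈ V, ‖x‖ = 1
  · obtain ⟨x0, hx0V, hx0⟩ := hne
    have hbdT : BddBelow RT := by
      refine ⟨-‖T‖, fun r hr => ?_⟩
      obtain ⟨x, hxV, hx, rfl⟩ := hr
      linarith [(abs_le.mp (rayleigh_abs_le T hx)).1]
    have h1 : sInf RT - ‖T - S‖ ≤ sInf RS := by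
      have hnS : RS.Nonempty := ⟨⟪S x0, x0⟫, ⟨x0, hx0V, hx0, rfl⟩⟩
      apply le_csInf hnS
      rintro r ⟨x, hxV, hx, rfl⟩
      have := csInf_le hbdT (⟨x, hxV, hx, rfl⟩ : ⟪T x, x⟫ ∈ RT)
      linarith [rayleigh_diff T S hx]
    linarith
  · have hT : RT = ∅ := by
      ext r; simp only [hRT, Set.mem_setOf_eq, Set.mem_empty_iff_false, iff_false]
      rintro ⟨x, hxV, hx, _⟩; exact hne ⟨x, hxV, hx⟩
    have hS : RS = ∅ := by
      ext r; simp only [hRS, Set.mem_setOf_eq, Set.mem_empty_iff_false, iff_false]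
      rintro ⟨x, hxV, hx, _⟩; exact hne ⟨x, hxV, hx⟩
    rw [hT, hS, Real.sInf_empty]
    simp [norm_nonneg]

lemma eigOp_le (T S : H →L[ℝ] H) (i : ℕ) :
    eigOp T i ≤ eigOp S i + ‖T - S‖ := by
  unfold eigOp
  set A := {c | ∃ V : Submodule ℝ H, Module.finrank ℝ V = i ∧
    c = sInf {r | ∃ x ∈ V, ‖x‖ = 1 ∧ r = ⟪T x, x⟫}} with hA
  set B := {c | ∃ V : Submodule ℝ H, Module.finrank ℝ V = i ∧
    c = sInf {r | ∃ x ∈ V, ‖x‖ = 1 ∧ r = ⟪S x, x⟫}} with hB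
  by_cases hne : ∃ V : Submodule ℝ H, Module.finrank ℝ V = i
  · obtain ⟨V0, hV0⟩ := hne
    have hBbdd : BddAbove B := by
      refine ⟨max ‖S‖ 0, ?_⟩
      rintro c ⟨V, hV, rfl⟩
      by_cases h : ∃ x ∈ V, ‖x‖ = 1
      · obtain ⟨x, hxV, hx⟩ := h
        have hbd : BddBelow {r | ∃ x ∈ V, ‖x‖ = 1 ∧ r = ⟪S x, x⟫} := by
          refine ⟨-‖S‖, fun r hr => ?_⟩
          obtain ⟨y, hyV, hy, rfl⟩ := hr
          linarith [(abs_le.mp (rayleigh_abs_le S hy)).1]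
        have h1 : sInf {r | ∃ x ∈ V, ‖x‖ = 1 ∧ r = ⟪S x, x⟫} ≤ ⟪S x, x⟫ :=
          csInf_le hbd ⟨x, hxV, hx, rfl⟩
        have h2 := (abs_le.mp (rayleigh_abs_le S hx)).2
        exact le_trans (le_trans h1 h2) (le_max_left _ _)
      · have : {r | ∃ x ∈ V, ‖x‖ = 1 ∧ r = ⟪S x, x⟫} = ∅ := by
          ext r; simp only [Set.mem_setOf_eq, Set.mem_empty_iff_false, iff_false]
          rintro ⟨x, hxV, hx, _⟩; exact h ⟨x, hxV, hx⟩
        rw [this, Real.sInf_empty]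
        exact le_max_right _ _
    have hnA : A.Nonempty :=
      ⟨sInf {r | ∃ x ∈ V0, ‖x‖ = 1 ∧ r = ⟪T x, x⟫}, ⟨V0, hV0, rfl⟩⟩
    apply csSup_le hnA
    rintro c ⟨V, hV, rfl⟩
    have h1 := sInfRay_le T S V
    have h2 : sInf {r | ∃ x ∈ V, ‖x‖ = 1 ∧ r = ⟪S x, x⟫} ≤ sSup B :=
      le_csSup hBbdd ⟨V, hV, rfl⟩
    linarith
  · have hAe : A = ∅ := by
      ext c; simp only [hA, Set.mem_setOf_eq, Set.mem_empty_iff_false, iff_false]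
      rintro ⟨V, hV, _⟩; exact hne ⟨V, hV⟩
    have hBe : B = ∅ := by
      ext c; simp only [hB, Set.mem_setOf_eq, Set.mem_empty_iff_false, iff_false]
      rintro ⟨V, hV, _⟩; exact hne ⟨V, hV⟩
    rw [hAe, hBe, Real.sSup_empty]
    simp [norm_nonneg]

end aux

/-- Weyl's inequality: for compact self-adjoint operators T, S on a
Hilbert space, |λ_i(T) − λ_i(S)| ≤ ‖T − S‖ for every i. -/
theorem weyl_inequality {H : Type*} [NormedAddCommGroup H] [InnerProductSpace ℝ H]
    [CompleteSpace H]
    (T S : H →L[ℝ] H)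
    (hTc : IsCompactOperator T) (hSc : IsCompactOperator S)
    (hT : IsSelfAdjoint T) (hS : IsSelfAdjoint S) (i : ℕ) :
    |eigOp T i - eigOp S i| ≤ ‖T - S‖ := by
  rw [abs_sub_le_iff]
  constructor
  · linarith [eigOp_le T S i]
  · have := eigOp_le S T i
    rw [norm_sub_rev] at this
    linarith
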